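/- arXiv:1006.3358 — 4 statements merged into one kernel-verified Lean document; each statement's English description precedes it below -/
import Mathlib

section
/- Let X be a complex Banach space and let A be a closed subspace of L∞(ℝ₊,X) that is BUC-invariant. Then C₀(ℝ₊,X) ⊆ A. -/
open MeasureTheory Filter Topology Complex Set

noncomputable section

/-- Convolution `(F ⋆ g)(t) = ∫ F (t - s) g s ds`. -/
def convol {X : Type*} [NormedAddCommGroup X] [NormedSpace ℂ X]
    (F : ℝ → X) (g : ℝ → ℂ) (t : ℝ) : X :=
  ∫ s : ℝ, g s • F (t - s)

/-- Fourier transform `f̂ ω = ∫ e^{-iωt} f t dt`. -/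
def ft (f : ℝ → ℂ) (ω : ℝ) : ℂ :=
  ∫ t : ℝ, Complex.exp (-(Complex.I * (ω : ℂ) * (t : ℂ))) * f t

/-- Membership in (a pointwise model of) `L^∞(J, X)`:
essentially the bounded measurable functions on `J`, extended by `0` off `J`. -/
def MemLinfOn {X : Type*} [NormedAddCommGroup X] (J : Set ℝ) (F : ℝ → X) : Prop :=
  AEStronglyMeasurable F volume ∧ (∃ C, ∀ t, ‖F t‖ ≤ C) ∧ ∀ t ∉ J, F t = 0

/-- `A` is a closed subspace of `L^∞(J, X)` (closed in the sup norm). -/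
structure ClosedSubspaceLinf {X : Type*} [NormedAddCommGroup X] [NormedSpace ℂ X]
    (J : Set ℝ) (A : Set (ℝ → X)) : Prop where
  mem_linf : ∀ F ∈ A, MemLinfOn J F
  zero_mem : (fun _ : ℝ => (0 : X)) ∈ A
  add_mem : ∀ F ∈ A, ∀ G ∈ A, (fun t => F t + G t) ∈ A
  smul_mem : ∀ (c : ℂ), ∀ F ∈ A, (fun t => c • F t) ∈ A
  closed : ∀ F : ℝ → X, MemLinfOn J F →
    (∀ ε > 0, ∃ G ∈ A, ∀ t : ℝ, ‖F t - G t‖ ≤ ε) → F ∈ A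

/-- Condition (2.3): `(𝔉 * f)|J ∈ A` for all `F ∈ A`, `f ∈ L¹(ℝ)`. -/
def Cond23 {X : Type*} [NormedAddCommGroup X] [NormedSpace ℂ X]
    (J : Set ℝ) (A : Set (ℝ → X)) : Prop :=
  ∀ F ∈ A, ∀ f : ℝ → ℂ, Integrable f volume → J.indicator (convol F f) ∈ A

/-- `A` is `BUC`-invariant. -/
def BUCInvariant {X : Type*} [NormedAddCommGroup X] (J : Set ℝ) (A : Set (ℝ → X)) : Prop :=
  ∀ φ : ℝ → X, UniformContinuous φ → (∃ C, ∀ t, ‖φ t‖ ≤ C) →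
    J.indicator φ ∈ A → ∀ a : ℝ, J.indicator (fun t => φ (t + a)) ∈ A

/-- `C₀(J, X)`: continuous on `J`, zero off `J`, vanishing at infinity. -/
def C0 {X : Type*} [NormedAddCommGroup X] (J : Set ℝ) : Set (ℝ → X) :=
  {u | ContinuousOn u J ∧ (∀ t ∉ J, u t = 0) ∧ Tendsto u (cocompact ℝ) (nhds 0)}

/-- Absolutely regular: locally integrable and `φ • F` integrable for all Schwartz `φ`. -/
def AbsolutelyRegular {X : Type*} [NormedAddCommGroup X] [NormedSpace ℂ X] (F : ℝ → X) : Prop :=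
  LocallyIntegrable F volume ∧
    ∀ φ : SchwartzMap ℝ ℂ, Integrable (fun t => φ t • F t) volume

/-- Reduced spectrum of `H` relative to `(A, 𝓢(ℝ))`. -/
def spS {X : Type*} [NormedAddCommGroup X] [NormedSpace ℂ X]
    (J : Set ℝ) (A : Set (ℝ → X)) (H : ℝ → X) : Set ℝ :=
  {ω | ∀ φ : SchwartzMap ℝ ℂ,
      J.indicator (convol H (fun t => φ t)) ∈ A → ft (fun t => φ t) ω = 0}

/-- Reduced spectrum of `H` relative to `(A, L¹(ℝ))`. -/
def spL1 {X : Type*} [NormedAddCommGroup X] [NormedSpace ℂ X]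
    (J : Set ℝ) (A : Set (ℝ → X)) (H : ℝ → X) : Set ℝ :=
  {ω | ∀ f : ℝ → ℂ, Integrable f volume →
      J.indicator (convol H f) ∈ A → ft f ω = 0}

/-- Reduced spectrum of `H` relative to `(A, 𝓓(ℝ))` (test functions). -/
def spD {X : Type*} [NormedAddCommGroup X] [NormedSpace ℂ X]
    (J : Set ℝ) (A : Set (ℝ → X)) (H : ℝ → X) : Set ℝ :=
  {ω | ∀ φ : ℝ → ℂ, ContDiff ℝ (⊤ : ℕ∞) φ → HasCompactSupport φ →
      J.indicator (convol H φ) ∈ A → ft φ ω = 0}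

/-- `F` is ergodic on `J` with mean `m`:
`sup_{t ∈ J} ‖(1/T) ∫₀^T F (t+s) ds - m‖ → 0` as `T → ∞`. -/
def ErgodicMean {X : Type*} [NormedAddCommGroup X] [NormedSpace ℂ X]
    (J : Set ℝ) (F : ℝ → X) (m : X) : Prop :=
  ∀ ε > 0, ∃ T₀ : ℝ, 0 < T₀ ∧ ∀ T ≥ T₀, ∀ t ∈ J,
    ‖(1 / T) • (∫ s in (0:ℝ)..T, F (t + s)) - m‖ ≤ ε

/-- `F` is ergodic on `J` (with some mean). -/
def IsErgodic {X : Type*} [NormedAddCommGroup X] [NormedSpace ℂ X]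
    (J : Set ℝ) (F : ℝ → X) : Prop :=
  ∃ m : X, ErgodicMean J F m

/-- `L¹_{loc,0}(J, X)`: locally integrable on `J` and vanishing at infinity within `J`. -/
def L1loc0 {X : Type*} [NormedAddCommGroup X] (J : Set ℝ) (ξ : ℝ → X) : Prop :=
  LocallyIntegrableOn ξ J volume ∧ Tendsto ξ (cocompact ℝ ⊓ 𝓟 J) (nhds 0)

/-- Slowly oscillating on `J`: `F = u + ξ` on `J` with `u` uniformly continuous
and `ξ ∈ L¹_{loc,0}(J, X)`. -/
def SOOn {X : Type*} [NormedAddCommGroup X] (J : Set ℝ) (F : ℝ → X) : Prop :=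
  ∃ u ξ : ℝ → X, UniformContinuousOn u J ∧ L1loc0 J ξ ∧ ∀ t ∈ J, F t = u t + ξ t

/-- Bohr almost periodic function on `ℝ`. -/
def IsAlmostPeriodic {X : Type*} [NormedAddCommGroup X] (a : ℝ → X) : Prop :=
  Continuous a ∧ (∃ C, ∀ t, ‖a t‖ ≤ C) ∧
    ∀ ε > 0, ∃ L > 0, ∀ x : ℝ, ∃ τ ∈ Set.Icc x (x + L),
      ∀ t : ℝ, ‖a (t + τ) - a t‖ ≤ ε

/-- Asymptotically almost periodic on `J`: `u = a|J + c`
with `a` almost periodic and `c ∈ C₀(J, X)`. -/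
def AAPOn {X : Type*} [NormedAddCommGroup X] (J : Set ℝ) (u : ℝ → X) : Prop :=
  ∃ a c : ℝ → X, IsAlmostPeriodic a ∧ c ∈ C0 (X := X) J ∧ ∀ t ∈ J, u t = a t + c t

/-- Mollifier `M_h F (t) = (1/h) ∫₀^h F (t+s) ds`. -/
def mollify {X : Type*} [NormedAddCommGroup X] [NormedSpace ℂ X]
    (h : ℝ) (F : ℝ → X) (t : ℝ) : X :=
  (1 / h) • ∫ s in (0:ℝ)..h, F (t + s)

/-- The functions `f_λ` (for `Re λ > 0` supported on `[0,∞)`, for `Re λ < 0` on `(-∞,0)`). -/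
def flam (l : ℂ) (t : ℝ) : ℂ :=
  if 0 < l.re then (if 0 ≤ t then Complex.exp (-(l * (t : ℂ))) else 0)
  else (if t < 0 then -Complex.exp (-(l * (t : ℂ))) else 0)

/-- Carleman transform of `F`, defined off the imaginary axis. -/
def carleman {X : Type*} [NormedAddCommGroup X] [NormedSpace ℂ X] (F : ℝ → X) (z : ℂ) : X :=
  if 0 < z.re then ∫ t in Set.Ioi (0:ℝ), Complex.exp (-(z * (t : ℂ))) • F t
  else -∫ t in Set.Ioi (0:ℝ), Complex.exp (z * (t : ℂ)) • F (-t)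

/-- `iω` is a regular point of the Carleman transform of `F`. -/
def CarlemanRegularAt {X : Type*} [NormedAddCommGroup X] [NormedSpace ℂ X]
    (F : ℝ → X) (ω : ℝ) : Prop :=
  ∃ V : Set ℂ, IsOpen V ∧ (Complex.I * (ω : ℂ)) ∈ V ∧
    ∃ g : ℂ → X, DifferentiableOn ℂ g (V ∪ {z : ℂ | z.re ≠ 0}) ∧
      ∀ z : ℂ, z.re ≠ 0 → g z = carleman F z

/-- Carleman spectrum of `F`. -/
def spC {X : Type*} [NormedAddCommGroup X] [NormedSpace ℂ X] (F : ℝ → X) : Set ℝ :=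
  {ω | ¬ CarlemanRegularAt F ω}

end

/-! The shifts of `A` reach every compactly supported continuous `ψ`: shifted far enough to the
left, `ψ` vanishes on `ℝ₊`, so its restriction is `0 ∈ A`, and shifting back recovers `ψ|ℝ₊`.
Such functions are uniformly dense in `C₀`, and `A` is closed. -/

open scoped ZeroAtInfty BoundedContinuousFunction

theorem ZeroAtInftyContinuousMap.exists_hasCompactSupport_norm_sub_le {α E : Type*}
    [TopologicalSpace α] [RegularSpace α] [LocallyCompactSpace α]
    [NormedAddCommGroup E] [NormedSpace ℝ E] (f : C₀(α, E)) {ε : ℝ} (hε : 0 < ε) :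
    ∃ g : α → E, Continuous g ∧ HasCompactSupport g ∧ ∀ x, ‖f x - g x‖ ≤ ε := by
  obtain ⟨K, hK, hKε⟩ : ∃ K, IsCompact K ∧ ∀ x ∉ K, ‖f x‖ ≤ ε := by
    have hsmall : ∀ᶠ x in cocompact α, ‖f x‖ ≤ ε :=
      (zero_at_infty f).norm.eventually (eventually_le_nhds (by simpa using hε))
    rw [Filter.eventually_iff, mem_cocompact] at hsmall
    obtain ⟨K, hK, hKc⟩ := hsmall
    exact ⟨K, hK, fun x hx => hKc hx⟩
  obtain ⟨χ, hχK, -, hχc, hχ01⟩ :=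
    exists_continuous_one_zero_of_isCompact hK isClosed_empty (disjoint_empty K)
  refine ⟨fun x => χ x • f x, χ.continuous.smul f.continuous, hχc.smul_right, fun x => ?_⟩
  by_cases hx : x ∈ K
  · simpa [hχK hx] using hε.le
  · have hcut : |1 - χ x| ≤ 1 := abs_le.2 ⟨by linarith [(hχ01 x).2], by linarith [(hχ01 x).1]⟩
    calc ‖f x - χ x • f x‖ = |1 - χ x| * ‖f x‖ := by
          rw [← Real.norm_eq_abs, ← norm_smul, sub_smul, one_smul]
      _ ≤ 1 * ε := mul_le_mul hcut (hKε x hx) (norm_nonneg _) zero_le_one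
      _ = ε := one_mul ε

theorem BUCInvariant.indicator_mem_of_hasCompactSupport {X : Type*} [NormedAddCommGroup X]
    {J : Set ℝ} {A : Set (ℝ → X)} (hinv : BUCInvariant J A) (hJ : BddBelow J)
    (h0 : (fun _ : ℝ => (0 : X)) ∈ A) {ψ : ℝ → X} (hψ : Continuous ψ)
    (hsupp : HasCompactSupport ψ) : J.indicator ψ ∈ A := by
  obtain ⟨b, hb⟩ := hJ
  obtain ⟨M, hM⟩ := hsupp.isCompact.bddAbove
  set a := M - b + 1
  set φ : ℝ → X := fun t => ψ (t + a)
  have hφ : Continuous φ := hψ.comp (continuous_add_const a)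
  have hφsupp : HasCompactSupport φ := hsupp.comp_homeomorph (Homeomorph.addRight a)
  have hφJ : J.indicator φ = fun _ => 0 := by
    funext t
    refine indicator_apply_eq_zero.2 fun ht => image_eq_zero_of_notMem_tsupport (x := t + a) ?_
    exact fun hmem => by linarith [hb ht, hM hmem]
  have hshift := hinv φ (hφsupp.uniformContinuous_of_continuous hφ)
    (hφsupp.exists_bound_of_continuous hφ) (hφJ ▸ h0) (-a)
  simpa [φ] using hshift

theorem BoundedContinuousFunction.memLinfOn_indicator {X : Type*} [NormedAddCommGroup X]
    (f : ℝ →ᵇ X) {J : Set ℝ} (hJ : MeasurableSet J) : MemLinfOn J (J.indicator f) :=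
  ⟨f.continuous.aestronglyMeasurable.indicator hJ,
    ⟨‖f‖, fun t => (norm_indicator_le_norm_self f t).trans (f.norm_coe_le_norm t)⟩,
    fun _ ht => indicator_of_notMem ht f⟩

theorem exists_zeroAtInfty_eq_indicator_of_mem_C0 {X : Type*} [NormedAddCommGroup X]
    {u : ℝ → X} (hu : u ∈ C0 (Ici (0 : ℝ))) : ∃ v : C₀(ℝ, X), u = (Ici 0).indicator v := by
  obtain ⟨hcont, hzero, htend⟩ := hu
  refine ⟨⟨⟨fun t => u |t|, hcont.comp_continuous continuous_abs abs_nonneg⟩,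
    htend.comp (tendsto_norm_cocompact_atTop.mono_right atTop_le_cocompact)⟩, ?_⟩
  funext t
  by_cases ht : t ∈ Ici 0
  · simp [indicator_of_mem ht, abs_of_nonneg (mem_Ici.1 ht)]
  · rw [indicator_of_notMem ht, hzero t ht]

theorem stmt_4_general {X : Type*} [NormedAddCommGroup X] [NormedSpace ℂ X]
    (A : Set (ℝ → X)) (hA : ClosedSubspaceLinf (Set.Ici (0:ℝ)) A)
    (hinv : BUCInvariant (Set.Ici (0:ℝ)) A) :
    C0 (X := X) (Set.Ici (0:ℝ)) ⊆ A := by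
  intro u hu
  obtain ⟨v, rfl⟩ := exists_zeroAtInfty_eq_indicator_of_mem_C0 hu
  refine hA.closed _ (v.toBCF.memLinfOn_indicator measurableSet_Ici) fun ε hε => ?_
  obtain ⟨ψ, hψ, hsupp, hclose⟩ := v.exists_hasCompactSupport_norm_sub_le hε
  refine ⟨_, hinv.indicator_mem_of_hasCompactSupport bddBelow_Ici hA.zero_mem hψ hsupp,
    fun t => ?_⟩
  rw [← Pi.sub_apply, ← indicator_sub']
  exact (norm_indicator_le_norm_self _ t).trans (hclose t)

/-- a closed `BUC`-invariant subspace of `L^∞(ℝ₊, X)` contains `C₀(ℝ₊, X)`. -/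
theorem stmt_4 {X : Type*} [NormedAddCommGroup X] [NormedSpace ℂ X] [CompleteSpace X]
    (A : Set (ℝ → X)) (hA : ClosedSubspaceLinf (Set.Ici (0:ℝ)) A)
    (hinv : BUCInvariant (Set.Ici (0:ℝ)) A) :
    C0 (X := X) (Set.Ici (0:ℝ)) ⊆ A :=
  stmt_4_general A hA hinv
end

section
/- For λ ∈ ℂ with Re λ > 0 define f_λ(t) = e^{−λt} for t ≥ 0 and f_λ(t) = 0 for t < 0; for λ ∈ ℂ with Re λ < 0 define f_λ(t) = −e^{−λt} for t < 0 and f_λ(t) = 0 for t ≥ 0. Then the linear span of the set {f_λ : λ ∈ ℂ, Re λ ≠ 0} is dense in L¹(ℝ,ℂ). -/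
open MeasureTheory Filter Topology Complex Set

/-! Continuous compactly supported functions are dense in `L¹`, so let `φ` be one. On `[0, ∞)`
substitute `x = e^{-t}`: the function `h x = φ (-log x) / x` is continuous on `[0, 1]` because it
vanishes near `0`, so Weierstrass gives a polynomial `p` with `|h - p| ≤ δ` there. Then
`e^{-t} p(e^{-t}) = ∑ aⱼ e^{-(j+1)t}` is a combination of the `f_{j+1}` and differs from `φ` by at
most `δ e^{-t}`. The same on `(-∞, 0)` with the `f_{-(j+1)}` gives an approximant with pointwise
error `δ e^{-|t|}`, whose integral is `2δ`. -/

open Polynomial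

lemma exists_complex_polynomial_near_of_continuousOn {a b : ℝ} {h : ℝ → ℂ}
    (hh : ContinuousOn h (Icc a b)) {ε : ℝ} (hε : 0 < ε) :
    ∃ p : ℂ[X], ∀ x ∈ Icc a b, ‖h x - p.eval (x : ℂ)‖ < ε := by
  obtain ⟨p, hp⟩ := exists_polynomial_near_of_continuousOn a b (fun x => (h x).re)
    (continuous_re.comp_continuousOn hh) (ε / 2) (half_pos hε)
  obtain ⟨q, hq⟩ := exists_polynomial_near_of_continuousOn a b (fun x => (h x).im)
    (continuous_im.comp_continuousOn hh) (ε / 2) (half_pos hε)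
  refine ⟨p.map ofRealHom + C I * q.map ofRealHom, fun x hx => ?_⟩
  have hpq : (p.map ofRealHom + C I * q.map ofRealHom).eval (x : ℂ)
      = p.eval x + I * q.eval x := by
    simp only [eval_add, eval_mul, eval_C, eval_map, ← ofRealHom_eq_coe, eval₂_at_apply]
  calc ‖h x - (p.map ofRealHom + C I * q.map ofRealHom).eval (x : ℂ)‖
      ≤ |(h x).re - p.eval x| + |(h x).im - q.eval x| := by
        simpa [hpq] using norm_le_abs_re_add_abs_im (h x - (p.eval x + I * q.eval x))
    _ < ε / 2 + ε / 2 := by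
        rw [abs_sub_comm, abs_sub_comm (h x).im]
        exact add_lt_add (hp x hx) (hq x hx)
    _ = ε := add_halves ε

lemma exists_polynomial_exp_near_of_eventually_zero {φ : ℝ → ℂ} (hφ : Continuous φ) {R : ℝ}
    (hR : ∀ t, R ≤ t → φ t = 0) {δ : ℝ} (hδ : 0 < δ) :
    ∃ p : ℂ[X], ∀ t, 0 ≤ t →
      ‖φ t - p.eval (Real.exp (-t) : ℂ) * Real.exp (-t)‖ ≤ δ * Real.exp (-t) := by
  set h : ℝ → ℂ := fun x => φ (-Real.log x) * (x : ℂ)⁻¹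
  have h_nhds_zero : h =ᶠ[𝓝 0] 0 := by
    filter_upwards [Ioo_mem_nhds (neg_lt_zero.2 (Real.exp_pos (-R))) (Real.exp_pos (-R))]
      with x hx
    rcases eq_or_ne x 0 with rfl | hx0
    · simp [h]
    · have hlog : Real.log x < -R := by
        rw [← Real.log_abs, ← Real.log_exp (-R)]
        exact Real.log_lt_log (abs_pos.2 hx0) (abs_lt.2 hx)
      simp [h, hR (-Real.log x) (by linarith)]
  have hcont : ContinuousOn h (Icc 0 1) := by
    refine fun x hx => ContinuousAt.continuousWithinAt ?_
    rcases hx.1.eq_or_lt with rfl | hpos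
    · exact continuousAt_const.congr h_nhds_zero.symm
    · exact (hφ.continuousAt.comp (Real.continuousAt_log hpos.ne').neg).mul
        (continuous_ofReal.continuousAt.inv₀ (ofReal_ne_zero.2 hpos.ne'))
  obtain ⟨p, hp⟩ := exists_complex_polynomial_near_of_continuousOn hcont hδ
  refine ⟨p, fun t ht => ?_⟩
  have hx : Real.exp (-t) ∈ Icc (0 : ℝ) 1 :=
    ⟨(Real.exp_pos _).le, Real.exp_le_one_iff.2 (neg_nonpos.2 ht)⟩
  have hφt : φ t = h (Real.exp (-t)) * Real.exp (-t) := by simp [h]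
  rw [hφt, ← sub_mul, norm_mul, norm_real, Real.norm_of_nonneg (Real.exp_pos _).le]
  exact mul_le_mul_of_nonneg_right (hp _ hx).le (Real.exp_pos _).le

def flamSpan : Submodule ℂ (ℝ → ℂ) :=
  Submodule.span ℂ {g : ℝ → ℂ | ∃ l : ℂ, l.re ≠ 0 ∧ g = flam l}

lemma flam_mem_flamSpan {l : ℂ} (hl : l.re ≠ 0) : flam l ∈ flamSpan :=
  Submodule.subset_span ⟨l, hl, rfl⟩

lemma flam_natCast_add_one (n : ℕ) (t : ℝ) :
    flam (n + 1) t = if 0 ≤ t then (Real.exp (-t) : ℂ) ^ (n + 1) else 0 := by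
  have hre : (0 : ℝ) < ((n : ℂ) + 1).re := by
    simp only [add_re, natCast_re, one_re]
    positivity
  rw [flam, if_pos hre, ofReal_exp, ← exp_nat_mul]
  push_cast
  ring_nf

lemma flam_neg_natCast_add_one (n : ℕ) (t : ℝ) :
    flam (-(n + 1)) t = if t < 0 then -(Real.exp t : ℂ) ^ (n + 1) else 0 := by
  have hre : ¬ (0 : ℝ) < (-((n : ℂ) + 1)).re := by
    simp only [neg_re, add_re, natCast_re, one_re, Left.neg_pos_iff, not_lt]
    positivity
  rw [flam, if_neg hre, ofReal_exp, ← exp_nat_mul]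
  push_cast
  ring_nf

lemma expPoly_Ici_mem_flamSpan (p : ℂ[X]) :
    (fun t : ℝ => if 0 ≤ t then p.eval (Real.exp (-t) : ℂ) * Real.exp (-t) else 0)
      ∈ flamSpan := by
  have hsum : (fun t : ℝ => if 0 ≤ t then p.eval (Real.exp (-t) : ℂ) * Real.exp (-t) else 0)
      = ∑ i ∈ Finset.range (p.natDegree + 1), p.coeff i • flam (i + 1) := by
    ext t
    simp only [Finset.sum_apply, Pi.smul_apply, smul_eq_mul, flam_natCast_add_one,
      eval_eq_sum_range]
    split_ifs <;> simp [Finset.sum_mul, pow_succ, mul_assoc]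
  rw [hsum]
  exact Submodule.sum_mem _ fun i _ =>
    Submodule.smul_mem _ _ (flam_mem_flamSpan (by
      simp only [add_re, natCast_re, one_re, ne_eq]
      positivity))

lemma expPoly_Iio_mem_flamSpan (p : ℂ[X]) :
    (fun t : ℝ => if t < 0 then p.eval (Real.exp t : ℂ) * Real.exp t else 0) ∈ flamSpan := by
  have hsum : (fun t : ℝ => if t < 0 then p.eval (Real.exp t : ℂ) * Real.exp t else 0)
      = ∑ i ∈ Finset.range (p.natDegree + 1), (-p.coeff i) • flam (-(i + 1)) := by
    ext t
    simp only [Finset.sum_apply, Pi.smul_apply, smul_eq_mul, flam_neg_natCast_add_one,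
      eval_eq_sum_range]
    split_ifs <;> simp [Finset.sum_mul, pow_succ, mul_assoc]
  rw [hsum]
  exact Submodule.sum_mem _ fun i _ =>
    Submodule.smul_mem _ _ (flam_mem_flamSpan (by
      simp only [neg_re, add_re, natCast_re, one_re, ne_eq, neg_eq_zero]
      positivity))

lemma exists_mem_flamSpan_near {φ : ℝ → ℂ} (hφ : Continuous φ) (hφc : HasCompactSupport φ)
    {δ : ℝ} (hδ : 0 < δ) : ∃ g ∈ flamSpan, ∀ t, ‖φ t - g t‖ ≤ δ * Real.exp (-|t|) := by
  obtain ⟨R, -, hR⟩ := hφc.exists_pos_le_norm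
  obtain ⟨p, hp⟩ := exists_polynomial_exp_near_of_eventually_zero hφ
    (fun t ht => hR t (ht.trans (le_abs_self t))) hδ
  obtain ⟨q, hq⟩ := exists_polynomial_exp_near_of_eventually_zero (hφ.comp continuous_neg)
    (fun t ht => hR (-t) (by simpa using ht.trans (le_abs_self t))) hδ
  refine ⟨_, add_mem (expPoly_Ici_mem_flamSpan p) (expPoly_Iio_mem_flamSpan q), fun t => ?_⟩
  rcases le_or_gt 0 t with ht | ht
  · simpa [ht, not_lt.2 ht, abs_of_nonneg ht] using hp t ht
  · simpa [ht, not_le.2 ht, abs_of_neg ht] using hq (-t) (by linarith)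

lemma integral_exp_neg_abs : ∫ t : ℝ, Real.exp (-|t|) = 2 := by
  rw [integral_comp_abs (f := fun t => Real.exp (-t)), integral_exp_neg_Ioi_zero, mul_one]

/-- the span of the functions `f_λ` (`Re λ ≠ 0`) is dense in `L¹(ℝ, ℂ)`. -/
theorem stmt_6 :
    ∀ f : ℝ → ℂ, MeasureTheory.Integrable f MeasureTheory.volume → ∀ ε > (0:ℝ),
      ∃ g ∈ Submodule.span ℂ {g : ℝ → ℂ | ∃ l : ℂ, l.re ≠ 0 ∧ g = flam l},
        ∫ t : ℝ, ‖f t - g t‖ < ε := by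
  intro f hf ε hε
  obtain ⟨f₀, hf₀c, hff₀, hf₀cont, hf₀⟩ :=
    hf.exists_hasCompactSupport_integral_sub_le (half_pos hε)
  obtain ⟨g, hg, hf₀g⟩ := exists_mem_flamSpan_near hf₀cont hf₀c (show 0 < ε / 8 by positivity)
  have hw : Integrable (fun t : ℝ => ε / 8 * Real.exp (-|t|)) :=
    (Integrable.of_integral_ne_zero (by rw [integral_exp_neg_abs]; norm_num)).const_mul _
  have hdiff : Integrable (fun t => ‖f t - f₀ t‖) := (hf.sub hf₀).norm
  refine ⟨g, hg, ?_⟩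
  calc ∫ t, ‖f t - g t‖ ≤ ∫ t, (‖f t - f₀ t‖ + ε / 8 * Real.exp (-|t|)) :=
        integral_mono_of_nonneg (ae_of_all _ fun _ => norm_nonneg _) (hdiff.add hw)
          (ae_of_all _ fun t => (norm_sub_le_norm_sub_add_norm_sub _ (f₀ t) _).trans
            (add_le_add le_rfl (hf₀g t)))
    _ = (∫ t, ‖f t - f₀ t‖) + ε / 4 := by
        rw [integral_add hdiff hw, integral_const_mul, integral_exp_neg_abs]
        ring
    _ < ε := by linarith
end

section
/- Let X be a complex Banach space. (a) If F ∈ L∞(ℝ,X) and 0 ∉ sp_{0,S}(F), then F is ergodic with mean 0. (b) If F ∈ SO(ℝ,X) and 0 ∉ sp_{0,S}(F), then F = u + ξ where u is bounded uniformly continuous and ergodic with mean 0 and ξ ∈ L¹_{loc,0}(ℝ,X); in particular F is ergodic with mean 0. -/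
open MeasureTheory Filter Topology Complex Set

/-!
Since `0 ∉ sp_{0,S}(F)` there is a Schwartz `φ` with `F ⋆ φ = 0` and `φ̂ 0 = ∫ φ ≠ 0`. Ergodicity
with mean `0` is uniform convergence of the window means `mollify T H` to `0`. These commute with
convolution, and for bounded `H` the function `mollify T H` is `2‖H‖∞ / T`-Lipschitz, so
`(∫ φ) • mollify T H` differs from `(mollify T H) ⋆ φ = mollify T (H ⋆ φ)` by `O(1 / T)`: a bounded
`H` is ergodic with mean `0` as soon as `H ⋆ φ` is. This gives (a) with `H = F`.
In (b), `F = u + ξ` where `u`, being uniformly continuous, has at most linear growth, and `ξ` is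
integrable up to an arbitrarily small bounded part. Then `u ⋆ φ = -(ξ ⋆ φ)` is bounded, which forces `u` to be bounded, and
`ξ ⋆ φ` is ergodic with mean `0` because `ξ` is.
-/

section

variable {X : Type*} [NormedAddCommGroup X]

theorem UniformContinuous.exists_norm_sub_le {u : ℝ → X} (hu : UniformContinuous u) :
    ∃ K B : ℝ, ∀ a b, ‖u a - u b‖ ≤ K * |a - b| + B := by
  obtain ⟨δ, hδ, hu⟩ := Metric.uniformContinuous_iff.1 hu 1 one_pos
  refine ⟨1 / δ, 1, fun a b => ?_⟩
  set n := ⌊|a - b| / δ⌋₊ + 1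
  have hn : (0 : ℝ) < n := by positivity
  set d := (a - b) / n
  have hstep : |d| < δ := by
    rw [abs_div, Nat.abs_cast, div_lt_iff₀ hn, ← div_lt_iff₀' hδ]
    exact_mod_cast Nat.lt_floor_add_one (|a - b| / δ)
  have htelescope : u a - u b = ∑ k ∈ Finset.range n, (u (b + ↑(k + 1) * d) - u (b + k * d)) := by
    rw [Finset.sum_range_sub (fun k : ℕ => u (b + k * d)) n]
    simp only [d, Nat.cast_zero, zero_mul, add_zero]
    rw [mul_div_cancel₀ _ hn.ne', add_sub_cancel]
  calc ‖u a - u b‖ ≤ ∑ k ∈ Finset.range n, ‖u (b + ↑(k + 1) * d) - u (b + k * d)‖ := by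
        rw [htelescope]; exact norm_sum_le _ _
    _ ≤ ∑ k ∈ Finset.range n, (1 : ℝ) := by
        refine Finset.sum_le_sum fun k _ => (le_of_lt ?_)
        rw [← dist_eq_norm]
        exact hu (by rw [Real.dist_eq]; convert hstep using 2; push_cast; ring)
    _ = n := by simp
    _ ≤ 1 / δ * |a - b| + 1 := by
        have := Nat.floor_le (div_nonneg (abs_nonneg (a - b)) hδ.le)
        push_cast [n]
        rw [one_div_mul_eq_div]
        linarith

theorem exists_integrable_norm_le_add_of_tendsto_zero {ξ : ℝ → X}
    (hξ : LocallyIntegrable ξ volume) (hξ0 : Tendsto ξ (cocompact ℝ) (𝓝 0)) {ε : ℝ}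
    (hε : 0 < ε) : ∃ g : ℝ → ℝ, Integrable g ∧ ∀ x, ‖ξ x‖ ≤ ‖g x‖ + ε := by
  obtain ⟨R, hR⟩ := Metric.closedBall_compl_subset_of_mem_cocompact
    (hξ0 (Metric.closedBall_mem_nhds 0 hε)) 0
  refine ⟨(Metric.closedBall 0 R).indicator fun x => ‖ξ x‖,
    IntegrableOn.integrable_indicator (hξ.integrableOn_isCompact (isCompact_closedBall 0 R)).norm
      Metric.isClosed_closedBall.measurableSet, fun x => ?_⟩
  by_cases hx : x ∈ Metric.closedBall 0 R
  · simp [indicator_of_mem hx, hε.le]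
  · simpa [indicator_of_notMem hx] using hR hx

theorem SchwartzMap.integrable_abs_mul_norm (φ : SchwartzMap ℝ ℂ) :
    Integrable (fun s : ℝ => |s| * ‖φ s‖) := by
  simpa using φ.integrable_pow_mul volume 1

variable [NormedSpace ℂ X]

namespace ErgodicMean

variable {J : Set ℝ} {F G : ℝ → X} {m n : X}

theorem zero : ErgodicMean J (0 : ℝ → X) 0 :=
  fun _ hε => ⟨1, one_pos, fun _ _ _ _ => by simpa using hε.le⟩

theorem neg (hF : ErgodicMean J F m) : ErgodicMean J (-F) (-m) := by
  intro ε hε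
  obtain ⟨T₀, hT₀, hF⟩ := hF ε hε
  refine ⟨T₀, hT₀, fun T hT t ht => ?_⟩
  simpa only [Pi.neg_apply, intervalIntegral.integral_neg, smul_neg, ← neg_sub', norm_neg]
    using hF T hT t ht

theorem add (hF : ErgodicMean J F m) (hG : ErgodicMean J G n)
    (hFi : LocallyIntegrable F volume) (hGi : LocallyIntegrable G volume) :
    ErgodicMean J (F + G) (m + n) := by
  intro ε hε
  obtain ⟨T₁, hT₁, hF⟩ := hF (ε / 2) (half_pos hε)
  obtain ⟨T₂, -, hG⟩ := hG (ε / 2) (half_pos hε)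
  refine ⟨max T₁ T₂, lt_max_of_lt_left hT₁, fun T hT t ht => ?_⟩
  have hshift {H : ℝ → X} (hH : LocallyIntegrable H volume) :
      IntervalIntegrable (fun r => H (t + r)) volume 0 T := by
    simpa using ((hH.integrableOn_isCompact isCompact_uIcc).intervalIntegrable (a := t + 0)
      (b := t + T)).comp_add_left t
  simp only [Pi.add_apply]
  rw [intervalIntegral.integral_add (hshift hFi) (hshift hGi), smul_add,
    add_sub_add_comm]
  calc _ ≤ ε / 2 + ε / 2 :=
        (norm_add_le _ _).trans (add_le_add (hF T (le_of_max_le_left hT) t ht)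
          (hG T (le_of_max_le_right hT) t ht))
    _ = ε := add_halves ε

end ErgodicMean

theorem ergodicMean_iff_mollify {J : Set ℝ} {F : ℝ → X} {m : X} :
    ErgodicMean J F m ↔ ∀ ε > 0, ∃ T₀ > 0, ∀ T ≥ T₀, ∀ t ∈ J, ‖mollify T F t - m‖ ≤ ε :=
  Iff.rfl

section Mollify

variable {H : ℝ → X} {C T : ℝ}

theorem mollify_eq_smul_integral (a : ℝ) : mollify T H a = (1 / T) • ∫ x in a..a + T, H x := by
  simp [mollify, intervalIntegral.integral_comp_add_left]

theorem norm_mollify_sub_mollify_le (hH : AEStronglyMeasurable H volume) (hC : ∀ x, ‖H x‖ ≤ C)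
    (hT : 0 < T) (a b : ℝ) : ‖mollify T H a - mollify T H b‖ ≤ 2 * C / T * |a - b| := by
  have hint (c d : ℝ) : IntervalIntegrable H volume c d :=
    (intervalIntegrable_const (c := C)).mono_fun hH.restrict
      (Eventually.of_forall fun x => (hC x).trans (Real.le_norm_self C))
  have hpiece (c d : ℝ) : ‖∫ x in c..d, H x‖ ≤ C * |d - c| :=
    intervalIntegral.norm_integral_le_of_norm_le_const fun x _ => hC x
  rw [mollify_eq_smul_integral, mollify_eq_smul_integral, ← smul_sub,
    intervalIntegral.integral_interval_sub_interval_comm' (hint _ _) (hint _ _) (hint _ _),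
    norm_smul, Real.norm_of_nonneg (by positivity)]
  calc 1 / T * ‖(∫ x in b + T..a + T, H x) - ∫ x in b..a, H x‖
      ≤ 1 / T * (C * |a + T - (b + T)| + C * |a - b|) := by
        gcongr
        exact (norm_sub_le _ _).trans (add_le_add (hpiece _ _) (hpiece _ _))
    _ = 2 * C / T * |a - b| := by ring_nf

theorem continuous_mollify (hH : AEStronglyMeasurable H volume) (hC : ∀ x, ‖H x‖ ≤ C)
    (hT : 0 < T) : Continuous (mollify T H) :=
  (LipschitzWith.of_dist_le' fun a b => by
    simpa only [dist_eq_norm, Real.norm_eq_abs] using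
      norm_mollify_sub_mollify_le hH hC hT a b).continuous

end Mollify

theorem ErgodicMean.of_forall_integrable_norm_le_add {J : Set ℝ} {G : ℝ → X}
    (h : ∀ ε > 0, ∃ g : ℝ → ℝ, Integrable g ∧ ∀ x, ‖G x‖ ≤ ‖g x‖ + ε) :
    ErgodicMean J G 0 := by
  rw [ergodicMean_iff_mollify]
  intro ε hε
  obtain ⟨g, hg, hdom⟩ := h (ε / 2) (half_pos hε)
  set I := ∫ x, ‖g x‖
  have hI : 0 ≤ I := integral_nonneg fun _ => norm_nonneg _
  refine ⟨2 * I / ε + 1, by positivity, fun T hT t _ => ?_⟩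
  have hT0 : 0 < T := lt_of_lt_of_le (by positivity) hT
  have hgt : IntervalIntegrable (fun r => ‖g (t + r)‖) volume 0 T :=
    (hg.norm.comp_add_left t).intervalIntegrable
  have hwindow : ‖∫ r in 0..T, G (t + r)‖ ≤ I + ε / 2 * T :=
    calc ‖∫ r in 0..T, G (t + r)‖ ≤ ∫ r in 0..T, (‖g (t + r)‖ + ε / 2) :=
          intervalIntegral.norm_integral_le_of_norm_le hT0.le
            (ae_of_all _ fun r _ => hdom _) (hgt.add intervalIntegrable_const)
      _ = (∫ r in 0..T, ‖g (t + r)‖) + ε / 2 * T := by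
          rw [intervalIntegral.integral_add hgt intervalIntegrable_const,
            intervalIntegral.integral_const, smul_eq_mul, sub_zero, mul_comm]
      _ ≤ I + ε / 2 * T := by
          gcongr
          rw [intervalIntegral.integral_of_le hT0.le]
          calc ∫ r in Ioc 0 T, ‖g (t + r)‖ ≤ ∫ r, ‖g (t + r)‖ :=
                setIntegral_le_integral (hg.norm.comp_add_left t)
                  (ae_of_all _ fun _ => norm_nonneg _)
            _ = I := integral_add_left_eq_self (fun x => ‖g x‖) t
  rw [sub_zero, mollify, norm_smul, Real.norm_of_nonneg (by positivity), one_div_mul_eq_div,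
    div_le_iff₀ hT0]
  have : 2 * I ≤ ε * T := by
    have := (div_le_iff₀' hε).1 (le_trans (le_add_of_nonneg_right zero_le_one) hT)
    linarith
  linarith

theorem ErgodicMean.of_tendsto_zero {J : Set ℝ} {ξ : ℝ → X} (hξ : LocallyIntegrable ξ volume)
    (hξ0 : Tendsto ξ (cocompact ℝ) (𝓝 0)) : ErgodicMean J ξ 0 :=
  of_forall_integrable_norm_le_add fun _ hε =>
    exists_integrable_norm_le_add_of_tendsto_zero hξ hξ0 hε

section Dominated

variable {G : ℝ → X} {g : ℝ → ℝ} {C : ℝ} (φ : SchwartzMap ℝ ℂ)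

theorem norm_smul_comp_sub_le (hdom : ∀ x, ‖G x‖ ≤ ‖g x‖ + C) (w s : ℝ) :
    ‖φ s • G (w - s)‖ ≤ SchwartzMap.seminorm ℝ 0 0 φ * ‖g (w - s)‖ + C * ‖φ s‖ := by
  rw [norm_smul]
  calc ‖φ s‖ * ‖G (w - s)‖ ≤ ‖φ s‖ * (‖g (w - s)‖ + C) := by gcongr; exact hdom _
    _ = ‖φ s‖ * ‖g (w - s)‖ + C * ‖φ s‖ := by ring
    _ ≤ _ := by gcongr; exact φ.norm_le_seminorm ℝ s

variable (hGm : AEStronglyMeasurable G volume) (hg : Integrable g)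
  (hdom : ∀ x, ‖G x‖ ≤ ‖g x‖ + C)
include hGm hg hdom

theorem integrable_smul_comp_sub (w : ℝ) : Integrable (fun s => φ s • G (w - s)) volume :=
  Integrable.mono' (((hg.norm.comp_sub_left w).const_mul _).add (φ.integrable.norm.const_mul C))
    (φ.continuous.aestronglyMeasurable.smul (hGm.comp_quasiMeasurePreserving
      (Measure.measurePreserving_sub_left volume w).quasiMeasurePreserving))
    (Eventually.of_forall (norm_smul_comp_sub_le φ hdom w))

theorem integral_norm_smul_comp_sub_le (w : ℝ) :
    ∫ s, ‖φ s • G (w - s)‖ ≤ SchwartzMap.seminorm ℝ 0 0 φ * (∫ x, ‖g x‖) + C * ∫ s, ‖φ s‖ := by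
  have hdom_int := ((hg.norm.comp_sub_left w).const_mul (SchwartzMap.seminorm ℝ 0 0 φ)).add
    (φ.integrable.norm.const_mul C)
  calc ∫ s, ‖φ s • G (w - s)‖
      ≤ ∫ s, (SchwartzMap.seminorm ℝ 0 0 φ * ‖g (w - s)‖ + C * ‖φ s‖) :=
        integral_mono (integrable_smul_comp_sub φ hGm hg hdom w).norm hdom_int
          (norm_smul_comp_sub_le φ hdom w)
    _ = _ := by
        rw [integral_add ((hg.norm.comp_sub_left w).const_mul _) (φ.integrable.norm.const_mul C),
          integral_const_mul, integral_const_mul,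
          integral_sub_left_eq_self (fun x => ‖g x‖) volume w]

theorem norm_convol_le (w : ℝ) :
    ‖convol G (fun s => φ s) w‖ ≤ SchwartzMap.seminorm ℝ 0 0 φ * (∫ x, ‖g x‖) + C * ∫ s, ‖φ s‖ :=
  (norm_integral_le_integral_norm _).trans (integral_norm_smul_comp_sub_le φ hGm hg hdom w)

theorem integrable_prod_smul_comp_sub (t T : ℝ) :
    Integrable (fun p : ℝ × ℝ => φ p.2 • G (t + p.1 - p.2))
      ((volume.restrict (Ioc 0 T)).prod volume) := by
  have hqmp : Measure.QuasiMeasurePreserving (fun p : ℝ × ℝ => t + p.1 - p.2)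
      ((volume.restrict (Ioc 0 T)).prod volume) volume := by
    simp only [add_sub_assoc]
    exact ((measurePreserving_add_left volume t).quasiMeasurePreserving.comp
      (quasiMeasurePreserving_sub volume volume)).mono_left
      ((Measure.absolutelyContinuous_of_le Measure.restrict_le_self).prod
        Measure.AbsolutelyContinuous.rfl)
  have hmeas : AEStronglyMeasurable (fun p : ℝ × ℝ => φ p.2 • G (t + p.1 - p.2))
      ((volume.restrict (Ioc 0 T)).prod volume) :=
    (φ.continuous.comp continuous_snd).aestronglyMeasurable.smul
      (hGm.comp_quasiMeasurePreserving hqmp)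
  have : IsFiniteMeasure (volume.restrict (Ioc (0 : ℝ) T)) := isFiniteMeasure_restrict.2 (by simp)
  refine (integrable_prod_iff hmeas).2 ⟨Eventually.of_forall fun r =>
    integrable_smul_comp_sub φ hGm hg hdom (t + r), ?_⟩
  refine (integrable_const (SchwartzMap.seminorm ℝ 0 0 φ * (∫ x, ‖g x‖) + C * ∫ s, ‖φ s‖)).mono'
    hmeas.norm.integral_prod_right' (Eventually.of_forall fun r => ?_)
  rw [Real.norm_of_nonneg (integral_nonneg fun _ => norm_nonneg _)]
  exact integral_norm_smul_comp_sub_le φ hGm hg hdom (t + r)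

theorem mollify_convol {T : ℝ} (hT : 0 ≤ T) (t : ℝ) :
    mollify T (convol G fun s => φ s) t = convol (mollify T G) (fun s => φ s) t := by
  simp only [mollify, convol, intervalIntegral.integral_of_le hT]
  rw [integral_integral_swap (f := fun r s => φ s • G (t + r - s))
    (integrable_prod_smul_comp_sub φ hGm hg hdom t T), ← integral_smul]
  congr 1 with s
  rw [integral_smul, smul_comm]
  simp_rw [add_sub_right_comm]

end Dominated

theorem ErgodicMean.convol_schwartzMap {G : ℝ → X} {g : ℝ → ℝ} {C : ℝ} (hG : ErgodicMean univ G 0)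
    (hGm : AEStronglyMeasurable G volume) (hg : Integrable g) (hdom : ∀ x, ‖G x‖ ≤ ‖g x‖ + C)
    (φ : SchwartzMap ℝ ℂ) : ErgodicMean univ (convol G fun s => φ s) 0 := by
  rw [ergodicMean_iff_mollify] at hG ⊢
  intro ε hε
  set L := ∫ s, ‖φ s‖
  have hL : 0 ≤ L := integral_nonneg fun _ => norm_nonneg _
  obtain ⟨T₀, hT₀, hG⟩ := hG (ε / (L + 1)) (by positivity)
  refine ⟨T₀, hT₀, fun T hT t _ => ?_⟩
  rw [sub_zero, mollify_convol φ hGm hg hdom (hT₀.le.trans hT)]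
  calc ‖convol (mollify T G) (fun s => φ s) t‖ ≤ ∫ s, ‖φ s‖ * (ε / (L + 1)) :=
        norm_integral_le_of_norm_le (φ.integrable.norm.mul_const _)
          (Eventually.of_forall fun s => by
            rw [norm_smul]
            gcongr
            simpa using hG T hT (t - s) trivial)
    _ = L * (ε / (L + 1)) := integral_mul_const _ _
    _ ≤ ε := by
        rw [← mul_div_assoc, div_le_iff₀ (by positivity)]
        nlinarith

section Growth

variable {M : ℝ → X} {K B : ℝ} (hM : AEStronglyMeasurable M volume)
  (hKB : ∀ a b, ‖M a - M b‖ ≤ K * |a - b| + B) (φ : SchwartzMap ℝ ℂ)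
include hM hKB

theorem integrable_smul_comp_sub_of_growth (w : ℝ) :
    Integrable (fun s => φ s • M (w - s)) volume := by
  refine Integrable.mono' ((φ.integrable.norm.const_mul (‖M w‖ + B)).add
    ((SchwartzMap.integrable_abs_mul_norm φ).const_mul K))
    (φ.continuous.aestronglyMeasurable.smul (hM.comp_quasiMeasurePreserving
      (Measure.measurePreserving_sub_left volume w).quasiMeasurePreserving))
    (Eventually.of_forall fun s => ?_)
  have hgrow : ‖M (w - s)‖ ≤ ‖M w‖ + (K * |s| + B) := by
    have := hKB (w - s) w
    rw [sub_sub_cancel_left, abs_neg] at this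
    exact (norm_le_norm_add_norm_sub' _ (M w)).trans (by gcongr)
  rw [norm_smul]
  calc ‖φ s‖ * ‖M (w - s)‖ ≤ ‖φ s‖ * (‖M w‖ + (K * |s| + B)) := by gcongr
    _ = _ := by simp only [Pi.add_apply]; ring

theorem norm_integral_smul_sub_convol_le [CompleteSpace X] (t : ℝ) :
    ‖(∫ s, φ s) • M t - convol M (fun s => φ s) t‖
      ≤ K * (∫ s, |s| * ‖φ s‖) + B * ∫ s, ‖φ s‖ := by
  have hdiff : (∫ s, φ s) • M t - convol M (fun s => φ s) t
      = ∫ s, φ s • (M t - M (t - s)) := by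
    rw [convol, ← integral_smul_const,
      ← integral_sub (φ.integrable.smul_const _) (integrable_smul_comp_sub_of_growth hM hKB φ t)]
    simp only [smul_sub]
  rw [hdiff, ← integral_const_mul, ← integral_const_mul, ← integral_add
    ((SchwartzMap.integrable_abs_mul_norm φ).const_mul K) (φ.integrable.norm.const_mul B)]
  refine norm_integral_le_of_norm_le (((SchwartzMap.integrable_abs_mul_norm φ).const_mul K).add
    (φ.integrable.norm.const_mul B)) (Eventually.of_forall fun s => ?_)
  have := hKB t (t - s)
  rw [sub_sub_cancel] at this
  rw [norm_smul]
  calc ‖φ s‖ * ‖M t - M (t - s)‖ ≤ ‖φ s‖ * (K * |s| + B) := by gcongr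
    _ = _ := by ring

end Growth

theorem ErgodicMean.of_convol [CompleteSpace X] {H : ℝ → X} {C : ℝ}
    (hHm : AEStronglyMeasurable H volume) (hC : ∀ x, ‖H x‖ ≤ C) (φ : SchwartzMap ℝ ℂ)
    (hφ : ∫ s, φ s ≠ 0)
    (h : ErgodicMean univ (convol H fun s => φ s) 0) : ErgodicMean univ H 0 := by
  rw [ergodicMean_iff_mollify] at h ⊢
  intro ε hε
  have hc : 0 < ‖∫ s, φ s‖ := norm_pos_iff.2 hφ
  have hC0 : 0 ≤ C := (norm_nonneg _).trans (hC 0)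
  set K := ∫ s, |s| * ‖φ s‖
  have hK : 0 ≤ K := integral_nonneg fun _ => by positivity
  obtain ⟨T₁, hT₁, h⟩ := h (ε * ‖∫ s, φ s‖ / 2) (by positivity)
  refine ⟨max T₁ (4 * C * K / (ε * ‖∫ s, φ s‖)), lt_max_of_lt_left hT₁, fun T hT t ht => ?_⟩
  have hT0 : 0 < T := hT₁.trans_le (le_of_max_le_left hT)
  have hM := norm_integral_smul_sub_convol_le (B := 0)
    (continuous_mollify hHm hC hT0).aestronglyMeasurable
    (fun a b => by simpa using norm_mollify_sub_mollify_le hHm hC hT0 a b) φ t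
  rw [← mollify_convol (g := fun _ => (0 : ℝ)) φ hHm (integrable_zero _ _ _) (by simpa using hC)
    hT0.le] at hM
  have hsmall : 2 * C / T * K ≤ ε * ‖∫ s, φ s‖ / 2 := by
    have := (div_le_iff₀ (by positivity)).1 (le_of_max_le_right hT)
    rw [div_mul_eq_mul_div, div_le_iff₀ hT0]
    linarith
  rw [sub_zero]
  refine le_of_mul_le_mul_left ?_ hc
  calc ‖∫ s, φ s‖ * ‖mollify T H t‖ = ‖(∫ s, φ s) • mollify T H t‖ := (norm_smul _ _).symm
    _ ≤ ‖(∫ s, φ s) • mollify T H t - mollify T (convol H fun s => φ s) t‖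
        + ‖mollify T (convol H fun s => φ s) t‖ := norm_le_norm_sub_add _ _
    _ ≤ ε * ‖∫ s, φ s‖ / 2 + ε * ‖∫ s, φ s‖ / 2 := by
        gcongr
        · exact hM.trans (by simpa using hsmall)
        · simpa using h T (le_of_max_le_left hT) t ht
    _ = ‖∫ s, φ s‖ * ε := by ring

theorem exists_bound_and_ergodicMean_of_convol_add_eq_zero [CompleteSpace X] {u ξ : ℝ → X}
    (hu : UniformContinuous u) (hξ : LocallyIntegrable ξ volume)
    (hξ0 : Tendsto ξ (cocompact ℝ) (𝓝 0)) (φ : SchwartzMap ℝ ℂ) (hφ : ∫ s, φ s ≠ 0)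
    (hconv : convol (u + ξ) (fun s => φ s) = 0) :
    (∃ C, ∀ t, ‖u t‖ ≤ C) ∧ ErgodicMean univ u 0 := by
  obtain ⟨K, B, hKB⟩ := hu.exists_norm_sub_le
  obtain ⟨g, hg, hdom⟩ := exists_integrable_norm_le_add_of_tendsto_zero hξ hξ0 one_pos
  have hum : AEStronglyMeasurable u volume := hu.continuous.aestronglyMeasurable
  have huconv : convol u (fun s => φ s) = -convol ξ (fun s => φ s) := by
    funext w
    have hw := congrFun hconv w
    simp only [convol, Pi.add_apply, smul_add, Pi.zero_apply] at hw
    rw [integral_add (integrable_smul_comp_sub_of_growth hum hKB φ w)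
      (integrable_smul_comp_sub φ hξ.aestronglyMeasurable hg hdom w)] at hw
    exact eq_neg_of_add_eq_zero_left hw
  have hbdd : ∃ C, ∀ t, ‖u t‖ ≤ C := by
    refine ⟨(K * (∫ s, |s| * ‖φ s‖) + B * (∫ s, ‖φ s‖)
      + (SchwartzMap.seminorm ℝ 0 0 φ * (∫ x, ‖g x‖) + 1 * ∫ s, ‖φ s‖)) / ‖∫ s, φ s‖,
      fun t => ?_⟩
    rw [le_div_iff₀ (norm_pos_iff.2 hφ)]
    calc ‖u t‖ * ‖∫ s, φ s‖ = ‖(∫ s, φ s) • u t‖ := by rw [norm_smul, mul_comm]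
      _ ≤ ‖(∫ s, φ s) • u t - convol u (fun s => φ s) t‖ + ‖convol u (fun s => φ s) t‖ :=
          norm_le_norm_sub_add _ _
      _ ≤ _ := by
          gcongr
          · exact norm_integral_smul_sub_convol_le hum hKB φ t
          · rw [huconv, Pi.neg_apply, norm_neg]
            exact norm_convol_le φ hξ.aestronglyMeasurable hg hdom t
  obtain ⟨C, hC⟩ := hbdd
  refine ⟨⟨C, hC⟩, ErgodicMean.of_convol hum hC φ hφ ?_⟩
  rw [huconv, ← neg_zero]
  exact ((ErgodicMean.of_tendsto_zero hξ hξ0).convol_schwartzMap hξ.aestronglyMeasurable hg hdom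
    φ).neg

end

/-- (a) a bounded measurable `F` with `0 ∉ sp_{0,S}(F)` is ergodic with mean 0;
(b) a slowly oscillating `F` with `0 ∉ sp_{0,S}(F)` is `u + ξ` with `u` BUC ergodic with
mean 0 and `ξ ∈ L¹_{loc,0}`; in particular `F` is ergodic with mean 0. -/
theorem stmt_12 {X : Type*} [NormedAddCommGroup X] [NormedSpace ℂ X] [CompleteSpace X] :
    (∀ F : ℝ → X, MeasureTheory.AEStronglyMeasurable F MeasureTheory.volume →
      (∃ C, ∀ t, ‖F t‖ ≤ C) →
      (0:ℝ) ∉ {ω : ℝ | ∀ φ : SchwartzMap ℝ ℂ,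
          convol F (fun t => φ t) = 0 → ft (fun t => φ t) ω = 0} →
      ErgodicMean Set.univ F 0) ∧
    (∀ F : ℝ → X, SOOn Set.univ F →
      (0:ℝ) ∉ {ω : ℝ | ∀ φ : SchwartzMap ℝ ℂ,
          convol F (fun t => φ t) = 0 → ft (fun t => φ t) ω = 0} →
      (∃ u ξ : ℝ → X, UniformContinuous u ∧ (∃ C, ∀ t, ‖u t‖ ≤ C) ∧
          ErgodicMean Set.univ u 0 ∧ L1loc0 Set.univ ξ ∧ ∀ t : ℝ, F t = u t + ξ t) ∧
        ErgodicMean Set.univ F 0) := by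
  have hspec {F : ℝ → X} (h0 : (0:ℝ) ∉ {ω : ℝ | ∀ φ : SchwartzMap ℝ ℂ,
      convol F (fun t => φ t) = 0 → ft (fun t => φ t) ω = 0}) :
      ∃ φ : SchwartzMap ℝ ℂ, convol F (fun t => φ t) = 0 ∧ ∫ s, φ s ≠ 0 := by
    simpa [ft] using h0
  refine ⟨fun F hFm ⟨C, hC⟩ h0 => ?_, fun F ⟨u, ξ, hu, ⟨hξ, hξ0⟩, hF⟩ h0 => ?_⟩
  · obtain ⟨φ, hconv, hφ⟩ := hspec h0
    exact ErgodicMean.of_convol hFm hC φ hφ (hconv ▸ ErgodicMean.zero)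
  · obtain ⟨φ, hconv, hφ⟩ := hspec h0
    rw [uniformContinuousOn_univ] at hu
    rw [locallyIntegrableOn_univ] at hξ
    rw [principal_univ, inf_top_eq] at hξ0
    obtain rfl : F = u + ξ := funext fun t => hF t trivial
    obtain ⟨hbdd, hu_erg⟩ :=
      exists_bound_and_ergodicMean_of_convol_add_eq_zero hu hξ hξ0 φ hφ hconv
    refine ⟨⟨u, ξ, hu, hbdd, hu_erg, ⟨hξ.locallyIntegrableOn _, by simpa using hξ0⟩,
      fun _ => rfl⟩, ?_⟩
    simpa using hu_erg.add (.of_tendsto_zero hξ hξ0) hu.continuous.locallyIntegrable hξ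
end

section
/- Let X be a complex Banach space, J ∈ {ℝ, ℝ₊}, and let A ⊆ L∞(J,X) be a closed subspace satisfying condition (2.3) such that γ_λ·a is ergodic for every a ∈ A and every λ ∈ ℝ. Let F ∈ L∞(J,X) and ω ∈ ℝ with ω ∉ sp_{A,S}(F). Then γ_{−ω}F is ergodic. If moreover every γ_λ·a (a ∈ A, λ ∈ ℝ) is ergodic with mean 0, then γ_{−ω}F is ergodic with mean 0. -/
/-!
Since `ω ∉ sp_{A,S}(F)`, some Schwartz `φ` with `φ̂(ω) ≠ 0` has `a := (F ⋆ φ)|J ∈ A`.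
Modulation turns `γ_{-ω} (F ⋆ φ)` into `(γ_{-ω} F) ⋆ (γ_{-ω} φ)`, and `∫ γ_{-ω} φ = φ̂(ω)`.
Convolving a bounded function `H` with a kernel `ψ` of finite first moment changes
`∫₀^T H(t + s) ds` only by `2 ‖H‖∞ ∫ |r| |ψ r| dr`, independently of `T`, because
`∫₀^T H(s - r) ds` and `∫₀^T H(s) ds` differ by two integrals over intervals of length `|r|`.
So the means of `γ_{-ω} F` and `φ̂(ω)⁻¹ γ_{-ω} a` over windows of length `T` agree up to
`O(1/T)`, uniformly in `t ∈ J`: if `γ_{-ω} a` has mean `m`, then `γ_{-ω} F` has mean `φ̂(ω)⁻¹ m`.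
-/

open MeasureTheory Filter Topology Complex Set

section ErgodicMean

variable {X : Type*} [NormedAddCommGroup X] [NormedSpace ℂ X] {J : Set ℝ} {P Q : ℝ → X} {m : X}

theorem ErgodicMean.const_smul (hQ : ErgodicMean J Q m) (c : ℂ) :
    ErgodicMean J (fun t => c • Q t) (c • m) := by
  intro ε hε
  obtain ⟨T₀, hT₀, hQT⟩ := hQ (ε / (‖c‖ + 1)) (by positivity)
  refine ⟨T₀, hT₀, fun T hT t ht => ?_⟩
  rw [intervalIntegral.integral_smul, smul_comm, ← smul_sub, norm_smul]
  calc ‖c‖ * ‖(1 / T) • (∫ s in (0:ℝ)..T, Q (t + s)) - m‖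
      ≤ ‖c‖ * (ε / (‖c‖ + 1)) := by gcongr; exact hQT T hT t ht
    _ ≤ ε := by
      rw [mul_div_assoc', div_le_iff₀ (by positivity)]
      nlinarith [norm_nonneg c]

theorem ErgodicMean.of_norm_integral_sub_le (hQ : ErgodicMean J Q m) {K : ℝ}
    (hPQ : ∀ T > 0, ∀ t ∈ J,
      ‖(∫ s in (0:ℝ)..T, P (t + s)) - ∫ s in (0:ℝ)..T, Q (t + s)‖ ≤ K) :
    ErgodicMean J P m := by
  intro ε hε
  obtain ⟨T₁, hT₁, hQT⟩ := hQ (ε / 2) (half_pos hε)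
  refine ⟨max T₁ (2 * K / ε), lt_max_of_lt_left hT₁, fun T hT t ht => ?_⟩
  have hT₁T : T₁ ≤ T := le_of_max_le_left hT
  have hTpos : 0 < T := hT₁.trans_le hT₁T
  have hKT : K / T ≤ ε / 2 := by
    rw [div_le_iff₀ hTpos]
    have := (div_le_iff₀ hε).mp (le_of_max_le_right hT)
    linarith
  calc ‖(1 / T) • (∫ s in (0:ℝ)..T, P (t + s)) - m‖
      ≤ ‖(1 / T) • ((∫ s in (0:ℝ)..T, P (t + s)) - ∫ s in (0:ℝ)..T, Q (t + s))‖
        + ‖(1 / T) • (∫ s in (0:ℝ)..T, Q (t + s)) - m‖ := by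
        rw [smul_sub]; exact norm_sub_le_norm_sub_add_norm_sub _ _ _
    _ ≤ K / T + ε / 2 := by
        gcongr
        · rw [norm_smul, Real.norm_of_nonneg (by positivity), one_div_mul_eq_div]
          gcongr
          exact hPQ T hTpos t ht
        · exact hQT T hT₁T t ht
    _ ≤ ε := by linarith

end ErgodicMean

section Convolution

variable {X : Type*} [NormedAddCommGroup X] [NormedSpace ℂ X]

theorem convol_add_left (F : ℝ → X) (φ : ℝ → ℂ) (t s : ℝ) :
    convol F φ (t + s) = convol (fun u => F (t + u)) φ s := by
  simp only [convol, add_sub_assoc]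

theorem smul_convol_of_map_add {e : ℝ → ℂ} (he : ∀ x y, e (x + y) = e x * e y)
    (F : ℝ → X) (φ : ℝ → ℂ) (t : ℝ) :
    e t • convol F φ t = convol (fun u => e u • F u) (fun r => e r * φ r) t := by
  simp only [convol, ← integral_smul, smul_smul]
  congr 1 with r
  rw [mul_right_comm, ← he, add_sub_cancel]

end Convolution

section Averaging

variable {E : Type*} [NormedAddCommGroup E] {H : ℝ → E} {C : ℝ}

theorem intervalIntegrable_of_norm_le (hH : AEStronglyMeasurable H volume)
    (hC : ∀ u, ‖H u‖ ≤ C) (a b : ℝ) : IntervalIntegrable H volume a b :=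
  (intervalIntegrable_iff).2 <|
    Measure.integrableOn_of_bounded measure_Ioc_lt_top.ne hH (ae_of_all _ hC)

theorem norm_intervalIntegral_sub_shift_le [NormedSpace ℝ E] (hH : AEStronglyMeasurable H volume)
    (hC : ∀ u, ‖H u‖ ≤ C) (T r : ℝ) :
    ‖(∫ u in (0:ℝ)..T, H u) - ∫ u in -r..T - r, H u‖ ≤ 2 * C * |r| := by
  have hI := intervalIntegrable_of_norm_le hH hC
  rw [intervalIntegral.integral_interval_sub_interval_comm (hI _ _) (hI _ _) (hI _ _)]
  calc _ ≤ ‖∫ u in (0:ℝ)..-r, H u‖ + ‖∫ u in T..T - r, H u‖ := norm_sub_le _ _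
    _ ≤ C * |-r - 0| + C * |T - r - T| :=
        add_le_add (intervalIntegral.norm_integral_le_of_norm_le_const fun u _ => hC u)
          (intervalIntegral.norm_integral_le_of_norm_le_const fun u _ => hC u)
    _ = 2 * C * |r| := by rw [sub_zero, sub_sub_cancel_left, abs_neg]; ring

theorem norm_smul_integral_sub_integral_convol_le [NormedSpace ℂ E] [CompleteSpace E]
    (hH : AEStronglyMeasurable H volume) (hC : ∀ u, ‖H u‖ ≤ C) {ψ : ℝ → ℂ} (hψ : Integrable ψ)
    (hψ₁ : Integrable fun r => ‖r‖ * ‖ψ r‖) {T : ℝ} (hT : 0 ≤ T) :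
    ‖(∫ r, ψ r) • (∫ s in (0:ℝ)..T, H s) - ∫ s in (0:ℝ)..T, convol H ψ s‖
      ≤ 2 * C * ∫ r, ‖r‖ * ‖ψ r‖ := by
  set μ := (volume : Measure ℝ).restrict (Ioc 0 T)
  have hprod : Integrable (fun p : ℝ × ℝ => ψ p.2 • H (p.1 - p.2)) (μ.prod volume) := by
    have hbound : Integrable (fun p : ℝ × ℝ => C * ‖ψ p.2‖) (μ.prod volume) :=
      Integrable.mul_prod (integrableOn_const (C := C) measure_Ioc_lt_top.ne) hψ.norm
    refine hbound.mono' ?_ (ae_of_all _ fun p => ?_)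
    · exact (hψ.aestronglyMeasurable.convolution_integrand (ContinuousLinearMap.lsmul ℂ ℂ)
        hH).mono_ac <| Measure.restrict_le_self.absolutelyContinuous.prod
          Measure.AbsolutelyContinuous.rfl
    · rw [norm_smul, mul_comm]
      exact mul_le_mul_of_nonneg_right (hC _) (norm_nonneg _)
  have hinner : ∀ r, ∫ s, ψ r • H (s - r) ∂μ = ψ r • ∫ s in -r..T - r, H s := fun r => by
    rw [integral_smul, ← intervalIntegral.integral_of_le hT,
      intervalIntegral.integral_comp_sub_right, zero_sub]
  have hswap : ∫ s in (0:ℝ)..T, convol H ψ s = ∫ r, ψ r • ∫ s in -r..T - r, H s := by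
    rw [intervalIntegral.integral_of_le hT]
    simp only [convol]
    rw [integral_integral_swap hprod]
    exact integral_congr_ae (ae_of_all _ hinner)
  have hshift : Integrable fun r => ψ r • ∫ s in -r..T - r, H s :=
    hprod.integral_prod_right.congr (ae_of_all _ hinner)
  rw [hswap, ← _root_.integral_smul_const, ← integral_sub (hψ.smul_const _) hshift,
    ← integral_const_mul]
  refine norm_integral_le_of_norm_le (hψ₁.const_mul _) (ae_of_all _ fun r => ?_)
  rw [← smul_sub, norm_smul, Real.norm_eq_abs r]
  calc ‖ψ r‖ * ‖(∫ s in (0:ℝ)..T, H s) - ∫ s in -r..T - r, H s‖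
      ≤ ‖ψ r‖ * (2 * C * |r|) :=
        mul_le_mul_of_nonneg_left (norm_intervalIntegral_sub_shift_le hH hC T r) (norm_nonneg _)
    _ = 2 * C * (|r| * ‖ψ r‖) := by ring

end Averaging

section Modulation

variable {X : Type*} [NormedAddCommGroup X] [NormedSpace ℂ X] [CompleteSpace X]
  {F : ℝ → X} {C : ℝ}

theorem norm_ft_smul_integral_sub_integral_convol_le (hFm : AEStronglyMeasurable F volume)
    (hC : ∀ u, ‖F u‖ ≤ C) (φ : SchwartzMap ℝ ℂ) (ω t : ℝ) {T : ℝ} (hT : 0 ≤ T) :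
    ‖ft (fun r => φ r) ω • (∫ s in (0:ℝ)..T, cexp (-(I * ω * ↑(t + s))) • F (t + s))
        - ∫ s in (0:ℝ)..T, cexp (-(I * ω * ↑(t + s))) • convol F (fun r => φ r) (t + s)‖
      ≤ 2 * C * ∫ r, ‖r‖ * ‖φ r‖ := by
  set e : ℝ → ℂ := fun x => cexp (-(I * ω * x))
  have he : ∀ x y, e (x + y) = e x * e y := fun x y => by
    simp only [e, ← Complex.exp_add]; push_cast; ring_nf
  have he_norm : ∀ x, ‖e x‖ = 1 := fun x => by
    simp [e, Complex.norm_exp]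
  have he_cont : Continuous e := by fun_prop
  set H : ℝ → X := fun u => e (t + u) • F (t + u)
  set ψ : ℝ → ℂ := fun r => e r * φ r
  have hψ_norm : ∀ r, ‖ψ r‖ = ‖φ r‖ := fun r => by rw [norm_mul, he_norm, one_mul]
  have hH : AEStronglyMeasurable H volume :=
    (he_cont.comp (continuous_const_add t)).aestronglyMeasurable.smul
      (hFm.comp_quasiMeasurePreserving (measurePreserving_add_left volume t).quasiMeasurePreserving)
  have hHC : ∀ u, ‖H u‖ ≤ C := fun u => by rw [norm_smul, he_norm, one_mul]; exact hC _
  have hψ : Integrable ψ :=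
    φ.integrable.norm.mono' (he_cont.mul φ.continuous).aestronglyMeasurable
      (ae_of_all _ fun r => (hψ_norm r).le)
  have hψ₁ : Integrable fun r => ‖r‖ * ‖ψ r‖ := by
    simpa only [hψ_norm, pow_one] using φ.integrable_pow_mul volume 1
  have hconv : ∀ s, cexp (-(I * ω * ↑(t + s))) • convol F (fun r => φ r) (t + s)
      = convol H ψ s := fun s => by
    rw [smul_convol_of_map_add he, convol_add_left]
  have hft : ft (fun r => φ r) ω = ∫ r, ψ r := rfl
  rw [hft, intervalIntegral.integral_congr fun s _ => hconv s]
  simpa only [hψ_norm] using norm_smul_integral_sub_integral_convol_le hH hHC hψ hψ₁ hT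

theorem ErgodicMean.of_modulated_indicator_convol {J : Set ℝ}
    (hJ : ∀ t ∈ J, ∀ s, 0 ≤ s → t + s ∈ J) (hFm : AEStronglyMeasurable F volume)
    (hC : ∀ u, ‖F u‖ ≤ C) (φ : SchwartzMap ℝ ℂ) {ω : ℝ} (hc : ft (fun r => φ r) ω ≠ 0) {m : X}
    (h : ErgodicMean J
      (fun t : ℝ => cexp (-(I * ω * t)) • J.indicator (convol F fun r => φ r) t) m) :
    ErgodicMean J (fun t : ℝ => cexp (-(I * ω * t)) • F t) ((ft (fun r => φ r) ω)⁻¹ • m) := by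
  set c := ft (fun r => φ r) ω
  refine (h.const_smul c⁻¹).of_norm_integral_sub_le (K := ‖c⁻¹‖ * (2 * C * ∫ r, ‖r‖ * ‖φ r‖))
    fun T hT t ht => ?_
  have hind : ∫ s in (0:ℝ)..T, c⁻¹ • (cexp (-(I * ω * ↑(t + s))) •
        J.indicator (convol F fun r => φ r) (t + s))
      = c⁻¹ • ∫ s in (0:ℝ)..T, cexp (-(I * ω * ↑(t + s))) • convol F (fun r => φ r) (t + s) := by
    rw [← intervalIntegral.integral_smul]
    refine intervalIntegral.integral_congr fun s hs => ?_
    rw [uIcc_of_le hT.le] at hs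
    simp only [indicator_of_mem (hJ t ht s hs.1)]
  rw [hind, ← inv_smul_smul₀ hc (∫ s in (0:ℝ)..T, _), ← smul_sub, norm_smul]
  exact mul_le_mul_of_nonneg_left
    (norm_ft_smul_integral_sub_integral_convol_le hFm hC φ ω t hT.le) (norm_nonneg _)

end Modulation

theorem stmt_13_general {X : Type*} [NormedAddCommGroup X] [NormedSpace ℂ X] [CompleteSpace X]
    (J : Set ℝ) (hJ : J = Set.univ ∨ J = Set.Ici (0:ℝ))
    (A : Set (ℝ → X))
    (F : ℝ → X) (hF : MemLinfOn J F) (ω : ℝ) (hω : ω ∉ spS J A F) :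
    ((∀ a ∈ A, ∀ l : ℝ,
        IsErgodic J (fun t : ℝ => Complex.exp (Complex.I * (l : ℂ) * (t : ℂ)) • a t)) →
      IsErgodic J (fun t : ℝ => Complex.exp (-(Complex.I * (ω : ℂ) * (t : ℂ))) • F t)) ∧
    ((∀ a ∈ A, ∀ l : ℝ,
        ErgodicMean J (fun t : ℝ => Complex.exp (Complex.I * (l : ℂ) * (t : ℂ)) • a t) 0) →
      ErgodicMean J (fun t : ℝ => Complex.exp (-(Complex.I * (ω : ℂ) * (t : ℂ))) • F t) 0) := by
  obtain ⟨φ, hφA, hc⟩ : ∃ φ : SchwartzMap ℝ ℂ,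
      J.indicator (convol F fun r => φ r) ∈ A ∧ ft (fun r => φ r) ω ≠ 0 := by
    simpa [spS] using hω
  obtain ⟨hFm, ⟨C, hC⟩, -⟩ := hF
  have hJ_add : ∀ t ∈ J, ∀ s, 0 ≤ s → t + s ∈ J := by
    rcases hJ with rfl | rfl
    exacts [fun _ _ _ _ => mem_univ _, fun t ht s hs => add_nonneg ht hs]
  have hγ : ∀ t : ℝ, cexp (I * ((-ω : ℝ) : ℂ) * t) = cexp (-(I * ω * t)) := fun t => by
    push_cast; ring_nf
  have hmean : ∀ m, ErgodicMean J (fun t : ℝ => cexp (I * ((-ω : ℝ) : ℂ) * t) •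
      J.indicator (convol F fun r => φ r) t) m →
      ErgodicMean J (fun t : ℝ => cexp (-(I * ω * t)) • F t) ((ft (fun r => φ r) ω)⁻¹ • m) :=
    fun m hm => .of_modulated_indicator_convol hJ_add hFm hC φ hc (by simpa only [hγ] using hm)
  exact ⟨fun h => (h _ hφA (-ω)).elim fun m hm => ⟨_, hmean m hm⟩,
    fun h => by simpa only [smul_zero] using hmean 0 (h _ hφA (-ω))⟩

/-- if every `γ_λ a` (`a ∈ A`) is ergodic and `ω ∉ sp_{A,S}(F)` for a bounded
`F`, then `γ_{-ω} F` is ergodic; if all the `γ_λ a` are ergodic with mean 0, so is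
`γ_{-ω} F`. -/
theorem stmt_13 {X : Type*} [NormedAddCommGroup X] [NormedSpace ℂ X] [CompleteSpace X]
    (J : Set ℝ) (hJ : J = Set.univ ∨ J = Set.Ici (0:ℝ))
    (A : Set (ℝ → X)) (hA : ClosedSubspaceLinf J A) (h23 : Cond23 J A)
    (F : ℝ → X) (hF : MemLinfOn J F) (ω : ℝ) (hω : ω ∉ spS J A F) :
    ((∀ a ∈ A, ∀ l : ℝ,
        IsErgodic J (fun t : ℝ => Complex.exp (Complex.I * (l : ℂ) * (t : ℂ)) • a t)) →
      IsErgodic J (fun t : ℝ => Complex.exp (-(Complex.I * (ω : ℂ) * (t : ℂ))) • F t)) ∧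
    ((∀ a ∈ A, ∀ l : ℝ,
        ErgodicMean J (fun t : ℝ => Complex.exp (Complex.I * (l : ℂ) * (t : ℂ)) • a t) 0) →
      ErgodicMean J (fun t : ℝ => Complex.exp (-(Complex.I * (ω : ℂ) * (t : ℂ))) • F t) 0) :=
  stmt_13_general J hJ A F hF ω hω
end
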